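/- For Hermitian positive semidefinite n×n matrices F and Δ with Δ ≠ 0 and F positive definite, det(I + F + Δ) > det(I + F). -/

import Mathlib

/-!
Writing the positive definite matrix `A` as `S * S` with `S` its Hermitian square root,
`A + Δ = S * (1 + M) * S` with `M = S⁻¹ * Δ * S⁻¹` positive semidefinite and nonzero, so
`det (A + Δ) = det A * det (1 + M)`. Diagonalizing `M`, `det (1 + M) = ∏ i, (1 + λᵢ)` with all
`λᵢ ≥ 0` and some `λᵢ > 0`, hence `det (1 + M) > 1`.
-/

open Matrix ComplexOrder

namespace Matrix

variable {ι 𝕜 : Type*} [Fintype ι] [DecidableEq ι] [RCLike 𝕜] {A Δ : Matrix ι ι 𝕜}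

theorem IsHermitian.det_one_add (hA : A.IsHermitian) :
    (1 + A).det = ∏ i, (1 + (hA.eigenvalues i : 𝕜)) := by
  conv_lhs =>
    rw [hA.spectral_theorem, ← map_one (Unitary.conjStarAlgAut 𝕜 _ hA.eigenvectorUnitary),
      ← map_add, ← diagonal_one, diagonal_add]
  simp [-Unitary.conjStarAlgAut_apply]

theorem PosSemidef.one_lt_det_one_add (hA : A.PosSemidef) (hA0 : A ≠ 0) : 1 < (1 + A).det := by
  obtain ⟨i, hi⟩ : ∃ i, hA.isHermitian.eigenvalues i ≠ 0 := by
    by_contra! h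
    exact hA0 (hA.isHermitian.eigenvalues_eq_zero_iff.mp (funext h))
  have hprod : (1 : ℝ) < ∏ j, (1 + hA.isHermitian.eigenvalues j) :=
    calc (1 : ℝ) = ∏ _j : ι, 1 := Finset.prod_const_one.symm
      _ < ∏ j, (1 + hA.isHermitian.eigenvalues j) :=
        Finset.prod_lt_prod (fun _ _ => one_pos)
          (fun j _ => le_add_of_nonneg_right (hA.eigenvalues_nonneg j))
          ⟨i, Finset.mem_univ i, lt_add_of_pos_right 1 ((hA.eigenvalues_nonneg i).lt_of_ne' hi)⟩
  rw [hA.isHermitian.det_one_add]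
  exact_mod_cast hprod

theorem PosDef.det_lt_det_add (hA : A.PosDef) (hΔ : Δ.PosSemidef) (hΔ0 : Δ ≠ 0) :
    A.det < (A + Δ).det := by
  open scoped MatrixOrder in
  obtain ⟨S, hSA, hS⟩ : ∃ S : (Matrix ι ι 𝕜)ˣ,
      (S : Matrix ι ι 𝕜) * S = A ∧ star (S : Matrix ι ι 𝕜) = S :=
    ⟨hA.isStrictlyPositive.sqrt.isUnit.unit, CFC.sqrt_mul_sqrt_self A,
      (CFC.sqrt_nonneg A).isSelfAdjoint.star_eq⟩
  set M : Matrix ι ι 𝕜 := (S⁻¹ : (Matrix ι ι 𝕜)ˣ) * Δ * (S⁻¹ : (Matrix ι ι 𝕜)ˣ)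
  have hΔM : Δ = (S : Matrix ι ι 𝕜) * M * star (S : Matrix ι ι 𝕜) := by
    simp [M, hS, mul_assoc]
  have hM : M.PosSemidef := S.isUnit.posSemidef_star_right_conjugate_iff.mp (hΔM ▸ hΔ)
  have hM0 : M ≠ 0 := fun h => hΔ0 (by simpa [h] using hΔM)
  have hAΔ : A + Δ = (S : Matrix ι ι 𝕜) * (1 + M) * S := by
    rw [hΔM, hS, ← hSA]
    noncomm_ring
  rw [hAΔ, ← hSA, det_mul, det_mul, det_mul]
  calc _ < (S : Matrix ι ι 𝕜).det * (S : Matrix ι ι 𝕜).det * (1 + M).det :=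
        lt_mul_of_one_lt_right (by rw [← det_mul, hSA]; exact hA.det_pos)
          (hM.one_lt_det_one_add hM0)
    _ = _ := by ring

end Matrix

/-- Strict determinant monotonicity: for `F` Hermitian positive definite and `Δ` Hermitian
PSD with `Δ ≠ 0`, `det (I + F + Δ) > det (I + F)`. -/
theorem det_one_add_strict_mono {n : ℕ} (F Δ : Matrix (Fin n) (Fin n) ℂ)
    (hF : F.PosDef) (hΔ : Δ.PosSemidef) (hΔ0 : Δ ≠ 0) :
    (1 + F).det.re < (1 + F + Δ).det.re :=
  (Complex.lt_def.mp ((PosDef.one.add_posSemidef hF.posSemidef).det_lt_det_add hΔ hΔ0)).1
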